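/- arXiv:math/0209023 — 4 statements merged into one kernel-verified Lean document; each statement's English description precedes it below -/
import Mathlib

section
/- For every d > 1 and every ξ ∈ F_q*, there exists a monic irreducible polynomial 𝔭 of degree d in F_q[T] whose constant term equals ξ. -/
/-!
The norm `𝔽_{q^d}ˣ → 𝔽_qˣ` is surjective, so each of its fibres has
`(q^d - 1)/(q - 1) = ∑_{i<d} q^i` elements. An element of `𝔽_{q^d}` that does not generate it
over `𝔽_q` is a root of `X^{q^e} - X` for a proper divisor `e` of `d`, so there are at most
`∑_{e ∣ d, e < d} q^e < ∑_{i<d} q^i` of them. Hence some generator `α` has norm `(-1)^d ξ`, and its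
minimal polynomial is monic irreducible of degree `d` with constant term `(-1)^d N(α) = ξ`.
-/

open Finset Polynomial Module IntermediateField

theorem MonoidHom.card_fiber_mul_card_of_surjective {G M : Type*} [Group G] [Group M]
    [Fintype G] [Fintype M] [DecidableEq M] {f : G →* M} (hf : Function.Surjective f) (y : M) :
    #{g | f g = y} * Fintype.card M = Fintype.card G := by
  calc #{g | f g = y} * Fintype.card M = ∑ z : M, #{g | f g = z} := by
        rw [sum_congr rfl fun z _ ↦ card_fiber_eq_of_mem_range f (hf z) (hf y), sum_const,
          card_univ, smul_eq_mul, mul_comm]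
    _ = Fintype.card G := (card_eq_sum_card_fiberwise fun _ _ ↦ mem_univ _).symm

theorem card_filter_pow_eq_self_le {R : Type*} [Field R] [Fintype R] [DecidableEq R] {n : ℕ}
    (hn : 1 < n) : #{x : R | x ^ n = x} ≤ n := by
  calc #{x : R | x ^ n = x} ≤ (X ^ n - X : R[X]).natDegree := by
        refine card_le_degree_of_subset_roots fun x hx ↦ ?_
        rw [mem_roots (FiniteField.X_pow_card_sub_X_ne_zero R hn)]
        simpa [sub_eq_zero] using (mem_filter.1 hx).2
    _ = n := FiniteField.X_pow_card_sub_X_natDegree_eq R hn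

theorem sum_properDivisors_pow_lt_sum_range_pow (q : ℕ) {n : ℕ} (hn : 0 < n) :
    ∑ e ∈ n.properDivisors, q ^ e < ∑ i ∈ range n, q ^ i := by
  have hsub : n.properDivisors ⊆ Ico 1 n := fun e he ↦ by
    obtain ⟨hdvd, hlt⟩ := Nat.mem_properDivisors.1 he
    exact mem_Ico.2 ⟨Nat.pos_of_dvd_of_pos hdvd hn, hlt⟩
  calc ∑ e ∈ n.properDivisors, q ^ e ≤ ∑ e ∈ Ico 1 n, q ^ e := sum_le_sum_of_subset hsub
    _ < q ^ 0 + ∑ e ∈ Ico 1 n, q ^ e := by simp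
    _ = ∑ i ∈ range n, q ^ i := by rw [range_eq_Ico, sum_eq_sum_Ico_succ_bot hn]

section FiniteExtension

variable (K : Type*) {L : Type*} [Field K] [Field L] [Algebra K L]

theorem pow_card_pow_natDegree_minpoly [Finite K] (x : L) (hx : IsIntegral K x) :
    x ^ Nat.card K ^ (minpoly K x).natDegree = x := by
  have hdvd := (minpoly.irreducible hx).natDegree_dvd_iff_dvd_X_pow_card_pow_sub_X.1 dvd_rfl
  simpa [sub_eq_zero] using aeval_eq_zero_of_dvd_aeval_eq_zero hdvd (minpoly.aeval K x)

theorem Algebra.norm_eq_neg_one_pow_mul_coeff_zero_minpoly [FiniteDimensional K L] (x : L)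
    (hx : K⟮x⟯ = ⊤) : Algebra.norm K x = (-1) ^ finrank K L * (minpoly K x).coeff 0 := by
  have hint := _root_.IsIntegral.of_finite K x
  have hdeg := (Field.primitive_element_iff_minpoly_natDegree_eq K x).1 hx
  have hrank : finrank K⟮x⟯ L = 1 := by
    have := finrank_mul_finrank K K⟮x⟯ L
    rw [adjoin.finrank hint, hdeg] at this
    exact (Nat.mul_eq_left finrank_pos.ne').1 this
  have hgen :=
    PowerBasis.norm_gen_eq_coeff_zero_minpoly (IntermediateField.adjoin.powerBasis hint)
  rw [IntermediateField.adjoin.powerBasis_dim, IntermediateField.adjoin.powerBasis_gen,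
    minpoly_gen, hdeg] at hgen
  rw [norm_eq_norm_adjoin, hrank, pow_one, hgen]

theorem card_filter_norm_eq [Fintype L] [DecidableEq K] {c : K} (hc : c ≠ 0) :
    #{x : L | Algebra.norm K x = c} = ∑ i ∈ range (finrank K L), Nat.card K ^ i := by
  classical
  have := Finite.of_injective _ (algebraMap K L).injective
  have := Fintype.ofFinite K
  let N : Lˣ →* Kˣ := Units.map (Algebra.norm K)
  have hfiber := N.card_fiber_mul_card_of_surjective (FiniteField.unitsMap_norm_surjective K L)
    (Units.mk0 c hc)
  have hunits : #{u : Lˣ | N u = Units.mk0 c hc} = #{x : L | Algebra.norm K x = c} := by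
    refine card_bij (fun u _ ↦ (u : L)) (fun u hu ↦ ?_) (fun u _ v _ ↦ Units.ext) fun x hx ↦ ?_
    · simpa [N, Units.ext_iff] using hu
    · have hx0 : x ≠ 0 := by rintro rfl; simp [eq_comm, hc] at hx
      exact ⟨Units.mk0 x hx0, by simpa [N, Units.ext_iff] using hx, rfl⟩
  have hgeom := Nat.geomSum_eq (m := Nat.card K) Finite.one_lt_card (finrank K L)
  rw [Fintype.card_units, Fintype.card_units, hunits, Fintype.card_eq_nat_card,
    Fintype.card_eq_nat_card, Module.natCard_eq_pow_finrank (K := K) (V := L)] at hfiber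
  rw [hgeom, ← hfiber, Nat.mul_div_cancel _ (Nat.sub_pos_of_lt Finite.one_lt_card)]

theorem exists_mem_properDivisors_pow_card_pow_eq_self [Finite K] [FiniteDimensional K L] (x : L)
    (hx : K⟮x⟯ ≠ ⊤) : ∃ e ∈ (finrank K L).properDivisors, x ^ Nat.card K ^ e = x := by
  have hint := IsIntegral.of_finite K x
  have hdvd := minpoly.degree_dvd hint
  refine ⟨_, Nat.mem_properDivisors.2 ⟨hdvd, ?_⟩, pow_card_pow_natDegree_minpoly K x hint⟩
  exact (Nat.le_of_dvd finrank_pos hdvd).lt_of_ne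
    (mt (Field.primitive_element_iff_minpoly_natDegree_eq K x).2 hx)

theorem exists_adjoin_eq_top_and_norm_eq [Finite L] {c : K} (hc : c ≠ 0) :
    ∃ x : L, K⟮x⟯ = ⊤ ∧ Algebra.norm K x = c := by
  classical
  have := Fintype.ofFinite L
  have := Finite.of_injective _ (algebraMap K L).injective
  by_contra! hcon
  have hsub : ({x : L | Algebra.norm K x = c} : Finset L) ⊆
      (finrank K L).properDivisors.biUnion fun e ↦ {x : L | x ^ Nat.card K ^ e = x} := by
    intro x hx
    obtain ⟨e, he, hxe⟩ := exists_mem_properDivisors_pow_card_pow_eq_self K x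
      fun htop ↦ hcon x htop (mem_filter.1 hx).2
    exact mem_biUnion.2 ⟨e, he, mem_filter.2 ⟨mem_univ _, hxe⟩⟩
  have hbound : ∀ e ∈ (finrank K L).properDivisors, #{x : L | x ^ Nat.card K ^ e = x} ≤
      Nat.card K ^ e := fun e he ↦ card_filter_pow_eq_self_le <|
    Nat.one_lt_pow (Nat.pos_of_mem_properDivisors he).ne' Finite.one_lt_card
  have := (card_le_card hsub).trans (card_biUnion_le.trans (sum_le_sum hbound))
  rw [card_filter_norm_eq K hc] at this
  exact this.not_gt (sum_properDivisors_pow_lt_sum_range_pow _ finrank_pos)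

end FiniteExtension

/-- Hansen–Mullen: for every `d > 1` and every nonzero `ξ ∈ F_q`, there exists a monic
irreducible polynomial `𝔭` of degree `d` in `F_q[T]` whose constant term equals `ξ`. -/
theorem hansen_mullen_prescribed_constant_term
    (Fq : Type*) [Field Fq] [Fintype Fq]
    (d : ℕ) (hd : 1 < d) (ξ : Fq) (hξ : ξ ≠ 0) :
    ∃ 𝔭 : Polynomial Fq, 𝔭.Monic ∧ Irreducible 𝔭 ∧ 𝔭.natDegree = d ∧ 𝔭.coeff 0 = ξ := by
  have : Fact (ringChar Fq).Prime := ⟨CharP.char_is_prime Fq _⟩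
  have : NeZero d := ⟨by omega⟩
  obtain ⟨x, hx, hnorm⟩ := exists_adjoin_eq_top_and_norm_eq Fq
    (L := FiniteField.Extension Fq (ringChar Fq) d) (c := (-1) ^ d * ξ) (by simp [hξ])
  have hdeg := (Field.primitive_element_iff_minpoly_natDegree_eq Fq x).1 hx
  rw [Algebra.norm_eq_neg_one_pow_mul_coeff_zero_minpoly Fq x hx] at hnorm
  rw [FiniteField.finrank_extension] at hdeg hnorm
  have hint := IsIntegral.of_finite Fq x
  exact ⟨minpoly Fq x, minpoly.monic hint, minpoly.irreducible hint, hdeg,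
    mul_left_cancel₀ (by simp) hnorm⟩
end

section
/- For any d > 1 and either choice of sign ε ∈ {±1}, there exists a monic irreducible polynomial 𝔭 of degree d in F_q[T] such that the quadratic character of T modulo 𝔭 equals ε. -/
/-!
Let `K/𝔽_q` have degree `d` and let `g` generate the cyclic group `Kˣ`. As `q^d - 1` is even,
`g` is a non-square and `g²` a square, and both have order at least `(q^d - 1)/2 ≥ q^(d/2)`.
A proper subfield of `K` has `q^e` elements with `e ∣ d`, `e ≤ d/2`, so it contains neither of
them. Hence either one, `α`, generates `K`: its minimal polynomial `𝔭` has degree `d`, and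
`A/𝔭 ≅ K` sends `T` to `α`, so `[T/𝔭] = 1` exactly when `α` is a square.
-/

open Polynomial IntermediateField Module

theorem isSquare_apply_iff {E M N : Type*} [Monoid M] [Monoid N] [EquivLike E M N]
    [MulEquivClass E M N] (e : E) {a : M} : IsSquare (e a) ↔ IsSquare a :=
  ⟨fun h => by simpa using h.map (MulEquivClass.toMulEquiv e).symm, IsSquare.map e⟩

theorem not_isSquare_of_forall_mem_zpowers {G : Type*} [Group G] [Finite G]
    (hG : Even (Nat.card G)) {g : G} (hg : ∀ x, x ∈ Subgroup.zpowers g) : ¬IsSquare g := by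
  rintro ⟨x, rfl⟩
  have hpow : (x * x) ^ (Nat.card G / 2) = 1 := by
    rw [← sq, ← pow_mul, Nat.mul_div_cancel' hG.two_dvd, pow_card_eq_one']
  have hdvd := orderOf_dvd_of_pow_eq_one hpow
  rw [orderOf_eq_card_of_forall_mem_zpowers hg] at hdvd
  have hpos : 0 < Nat.card G / 2 := by
    have := Nat.card_pos (α := G)
    obtain ⟨k, hk⟩ := hG
    omega
  have := Nat.le_of_dvd hpos hdvd
  omega

theorem FiniteField.orderOf_le_natCard_sub_one {L : Type*} [Field L] [Finite L] {x : L}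
    (hx : x ≠ 0) : orderOf x ≤ Nat.card L - 1 := by
  rw [← Units.val_mk0 hx, orderOf_units, ← Nat.card_units]
  exact Nat.le_of_dvd Nat.card_pos (orderOf_dvd_natCard _)

section

variable {F K : Type*} [Field F] [Field K] [Algebra F K]

theorem isSquare_root_minpoly_iff {α : K} (hα : IsIntegral F α) (htop : F⟮α⟯ = ⊤) :
    IsSquare (AdjoinRoot.root (minpoly F α)) ↔ IsSquare α := by
  let e := (adjoinRootEquivAdjoin F hα).trans ((equivOfEq htop).trans topEquiv)
  have he : e (AdjoinRoot.root (minpoly F α)) = α := by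
    simp [e, adjoinRootEquivAdjoin_apply_root]
  rw [← isSquare_apply_iff e, he]

variable [Finite K]

theorem adjoin_simple_eq_top_of_pow_le_orderOf {α : K}
    (hα : Nat.card F ^ (finrank F K / 2) ≤ orderOf α) : F⟮α⟯ = ⊤ := by
  have : Finite F := Finite.of_injective _ (algebraMap F K).injective
  have hq : 1 < Nat.card F := Finite.one_lt_card
  set e := finrank F F⟮α⟯
  have hα0 : AdjoinSimple.gen F α ≠ 0 := by
    intro h
    rw [show α = 0 from congrArg Subtype.val h, orderOf_zero, Nat.le_zero] at hα
    exact pow_ne_zero _ (by omega) hα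
  have hord : orderOf α ≤ Nat.card F ^ e - 1 := by
    rw [← natCard_eq_pow_finrank]
    exact (orderOf_submonoid (AdjoinSimple.gen F α)).trans_le
      (FiniteField.orderOf_le_natCard_sub_one hα0)
  refine eq_of_le_of_finrank_eq le_top (finrank_top'.trans ?_).symm
  by_contra hne
  obtain ⟨_ | _ | k, hk⟩ : e ∣ finrank F K :=
    ⟨finrank F⟮α⟯ K, (finrank_mul_finrank F F⟮α⟯ K).symm⟩
  · exact finrank_pos.ne' (hk.trans (mul_zero e))
  · exact hne (hk.trans (mul_one e))
  have : Nat.card F ^ e ≤ Nat.card F ^ (finrank F K / 2) :=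
    Nat.pow_le_pow_right hq.le ((Nat.le_div_iff_mul_le two_pos).mpr
      (hk ▸ Nat.mul_le_mul_left e (by omega)))
  have : 0 < Nat.card F ^ e := Nat.pow_pos (by omega)
  omega

theorem exists_monic_irreducible_natDegree_eq_isSquare_mk_X_iff {d : ℕ} (hK : finrank F K = d)
    {α : K} (hα : Nat.card F ^ (d / 2) ≤ orderOf α) :
    ∃ 𝔭 : F[X], 𝔭.Monic ∧ Irreducible 𝔭 ∧ 𝔭.natDegree = d ∧
      (IsSquare (Ideal.Quotient.mk (Ideal.span {𝔭}) X) ↔ IsSquare α) := by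
  have : Finite F := Finite.of_injective _ (algebraMap F K).injective
  have hint : IsIntegral F α := .of_finite F α
  subst hK
  have htop := adjoin_simple_eq_top_of_pow_le_orderOf hα
  refine ⟨minpoly F α, minpoly.monic hint, minpoly.irreducible hint, ?_,
    isSquare_root_minpoly_iff hint htop⟩
  rw [← adjoin.finrank hint, htop, finrank_top']

end

theorem FiniteField.exists_le_orderOf_isSquare_iff {K : Type*} [Field K] [Finite K]
    (hK : Odd (Nat.card K)) (P : Prop) :
    ∃ α : K, (Nat.card K - 1) / 2 ≤ orderOf α ∧ (IsSquare α ↔ P) := by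
  obtain ⟨g, hg⟩ := IsCyclic.exists_generator (α := Kˣ)
  have hord : orderOf (g : K) = Nat.card K - 1 := by
    rw [orderOf_units, orderOf_eq_card_of_forall_mem_zpowers hg, Nat.card_units]
  have heven : Even (Nat.card K - 1) := Nat.Odd.sub_odd hK odd_one
  by_cases hP : P
  · refine ⟨(g : K) ^ 2, ?_, iff_of_true (IsSquare.sq _) hP⟩
    rw [orderOf_pow_of_dvd two_ne_zero (hord ▸ heven.two_dvd), hord]
  · refine ⟨g, by omega, iff_of_false ?_ hP⟩
    rintro ⟨y, hy⟩
    have hy0 : y ≠ 0 := by rintro rfl; simp at hy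
    exact not_isSquare_of_forall_mem_zpowers ((Nat.card_units K).symm ▸ heven) hg
      ⟨Units.mk0 y hy0, Units.ext hy⟩

theorem Nat.pow_div_two_le_pow_sub_one_div_two {q d : ℕ} (hq : 3 ≤ q) (hd : d ≠ 0) :
    q ^ (d / 2) ≤ (q ^ d - 1) / 2 := by
  have hsplit : q ^ d = q ^ (d / 2) * q ^ (d - d / 2) := by rw [← pow_add]; congr; omega
  have : 3 ≤ q ^ (d - d / 2) := hq.trans (Nat.le_self_pow (by omega) q)
  have : 1 ≤ q ^ (d / 2) := Nat.one_le_pow _ _ (by omega)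
  have : q ^ (d / 2) * 3 ≤ q ^ d := hsplit ▸ Nat.mul_le_mul_left _ ‹_›
  omega

theorem exists_irreducible_with_prescribed_quadratic_character_of_T_general
    (Fq : Type*) [Field Fq] [Fintype Fq] (hq : Odd (Fintype.card Fq))
    (d : ℕ) (hd : 1 < d) (ε : ℤ) :
    ∃ 𝔭 : Polynomial Fq, 𝔭.Monic ∧ Irreducible 𝔭 ∧ 𝔭.natDegree = d ∧
      (IsSquare ((Ideal.Quotient.mk (Ideal.span {𝔭})) (Polynomial.X : Polynomial Fq)) ↔
        ε = 1) := by
  obtain ⟨p, _⟩ := CharP.exists Fq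
  have : Fact p.Prime := ⟨CharP.char_is_prime Fq p⟩
  have : NeZero d := ⟨by omega⟩
  let K := FiniteField.Extension Fq p d
  rw [Fintype.card_eq_nat_card] at hq
  have hcard : Nat.card K = Nat.card Fq ^ d := FiniteField.natCard_extension Fq p d
  obtain ⟨α, hα, hsq⟩ := FiniteField.exists_le_orderOf_isSquare_iff (hcard ▸ hq.pow) (ε = 1)
  have hq3 : 3 ≤ Nat.card Fq := by
    have : 1 < Nat.card Fq := Finite.one_lt_card
    obtain ⟨k, hk⟩ := hq; omega
  have hle := (Nat.pow_div_two_le_pow_sub_one_div_two hq3 (NeZero.ne d)).trans (hcard ▸ hα)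
  simpa only [hsq] using exists_monic_irreducible_natDegree_eq_isSquare_mk_X_iff
    (FiniteField.finrank_extension Fq p d) hle

/-- For any `d > 1` and either choice of sign `ε ∈ {±1}`, there exists a monic irreducible
polynomial `𝔭` of degree `d` in `F_q[T]` (`q` odd) such that the quadratic character of `T`
modulo `𝔭` equals `ε`, i.e. the image of `T` in `A/𝔭` is a square exactly when `ε = 1`. -/
theorem exists_irreducible_with_prescribed_quadratic_character_of_T
    (Fq : Type*) [Field Fq] [Fintype Fq] (hq : Odd (Fintype.card Fq))
    (d : ℕ) (hd : 1 < d) (ε : ℤ) (hε : ε = 1 ∨ ε = -1) :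
    ∃ 𝔭 : Polynomial Fq, 𝔭.Monic ∧ Irreducible 𝔭 ∧ 𝔭.natDegree = d ∧
      (IsSquare ((Ideal.Quotient.mk (Ideal.span {𝔭})) (Polynomial.X : Polynomial Fq)) ↔
        ε = 1) :=
  exists_irreducible_with_prescribed_quadratic_character_of_T_general Fq hq d hd ε
end

section
/- In the twisted polynomial ring L{τ} over a field L containing F_q (with τx = x^q τ), the identity (aτ + 1)·T = (a T^q τ + T)·1 holds, and more generally conjugating (a₁τ+T)(a₂τ+1)⋯(a_rτ+1) by u = (a_{s+1}τ+1)⋯(a_rτ+1) (r = 2s) yields u φ_T u^{-1} = (a_{s+1}T^q τ + T)(a_{s+2}T^{q-1}τ+1)⋯(a_r T^{q-1}τ+1)(T^{-1}a_1 τ + 1)(a_2τ+1)⋯(a_sτ+1). -/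
/-- Identities in the twisted polynomial ring `L{τ}` (embedded in its skew field of fractions
`D`, with `ι : L → D` and `τ·x = x^q·τ`): first, `(aτ + 1)·T = (a T^q τ + T)·1`; and for
`r = 2s`, conjugating `φ_T = (a₁τ+T)(a₂τ+1)⋯(a_rτ+1)` by `u = (a_{s+1}τ+1)⋯(a_rτ+1)` yields
`u φ_T u⁻¹ = (a_{s+1}T^q τ + T)(a_{s+2}T^{q-1}τ+1)⋯(a_r T^{q-1}τ+1)(T⁻¹a₁τ+1)(a₂τ+1)⋯(a_sτ+1)`. -/
theorem atkin_lehner_conjugation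
    (L : Type*) [Field L] (D : Type*) [DivisionRing D]
    (ι : L →+* D) (τ : D) (q : ℕ) (hq : 1 ≤ q)
    (hcomm : ∀ x : L, τ * ι x = ι (x ^ q) * τ)
    (T : L) (hT : T ≠ 0)
    (s : ℕ) (hs : 1 ≤ s) (r : ℕ) (hr : r = 2 * s)
    (a : ℕ → L) (ha : ∀ i, 1 ≤ i → i ≤ r → a i ≠ 0) :
    (∀ b : L, (ι b * τ + 1) * ι T = ι (b * T ^ q) * τ + ι T) ∧
    (∀ φT u : D,
      φT = (ι (a 1) * τ + ι T) *
        ((List.range (r - 1)).map fun i => ι (a (i + 2)) * τ + 1).prod →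
      u = ((List.range s).map fun i => ι (a (s + 1 + i)) * τ + 1).prod →
      u ≠ 0 →
      u * φT * u⁻¹ =
        (ι (a (s + 1) * T ^ q) * τ + ι T) *
        ((List.range (s - 1)).map fun i => ι (a (s + 2 + i) * T ^ (q - 1)) * τ + 1).prod *
        ((ι (T⁻¹ * a 1) * τ + 1) *
          ((List.range (s - 1)).map fun i => ι (a (i + 2)) * τ + 1).prod)) := by
  have hT1 : T * T ^ (q - 1) = T ^ q := by
    conv_rhs => rw [show q = (q - 1) + 1 by omega]
    rw [pow_succ']
  have key : ∀ b : L, (ι b * τ + 1) * ι T = ι (b * T ^ q) * τ + ι T := by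
    intro b
    rw [add_mul, one_mul, mul_assoc, hcomm, ← mul_assoc, ← map_mul]
  have move : ∀ b : L, (ι b * τ + 1) * ι T = ι T * (ι (b * T ^ (q - 1)) * τ + 1) := by
    intro b
    rw [key, mul_add, mul_one, ← mul_assoc, ← map_mul]
    congr 3
    rw [← hT1]; ring
  have moveList : ∀ (f : ℕ → L) (n : ℕ),
      ((List.range n).map fun i => ι (f i) * τ + 1).prod * ι T
        = ι T * ((List.range n).map fun i => ι (f i * T ^ (q - 1)) * τ + 1).prod := by
    intro f n
    induction n with
    | zero => simp
    | succ n ih =>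
      rw [List.range_succ, List.map_append, List.prod_append, List.map_append,
        List.prod_append]
      simp only [List.map_cons, List.map_nil, List.prod_cons, List.prod_nil, mul_one]
      rw [mul_assoc, move (f n), ← mul_assoc, ih, mul_assoc]
  have splitAdd : ∀ (g : ℕ → D) (m n : ℕ),
      ((List.range (m + n)).map g).prod
        = ((List.range m).map g).prod * ((List.range n).map fun i => g (m + i)).prod := by
    intro g m n
    rw [List.range_add, List.map_append, List.prod_append, List.map_map]
    rfl
  refine ⟨key, ?_⟩
  intro φT u hφ hu hune
  subst hφ hu
  -- split the big product: r - 1 = (s-1) + s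
  have hsplit : ((List.range (r - 1)).map fun i => ι (a (i + 2)) * τ + 1).prod
      = ((List.range (s - 1)).map fun i => ι (a (i + 2)) * τ + 1).prod *
        ((List.range s).map fun i => ι (a (s + 1 + i)) * τ + 1).prod := by
    rw [show r - 1 = (s - 1) + s by omega, splitAdd]
    congr 1
    apply congrArg
    apply List.map_congr_left
    intro i _
    have h2 : s - 1 + i + 2 = s + 1 + i := by omega
    rw [h2]
  -- split u at the front: s = 1 + (s-1)
  have husplit : ((List.range s).map fun i => ι (a (s + 1 + i)) * τ + 1).prod
      = (ι (a (s + 1)) * τ + 1) *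
        ((List.range (s - 1)).map fun i => ι (a (s + 2 + i)) * τ + 1).prod := by
    have front : ∀ (g : ℕ → D) (n : ℕ), 1 ≤ n →
        ((List.range n).map g).prod
          = g 0 * ((List.range (n - 1)).map fun i => g (1 + i)).prod := by
      intro g n hn
      obtain ⟨m, rfl⟩ : ∃ m, n = 1 + m := ⟨n - 1, by omega⟩
      rw [splitAdd, show 1 + m - 1 = m by omega]
      congr 1
      simp [List.range_succ]
    rw [front _ s hs]
    congr 1
    apply congrArg
    apply List.map_congr_left
    intro i _
    have h2 : s + 1 + (1 + i) = s + 2 + i := by omega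
    rw [h2]
  -- u * ι T equals the first block of the RHS
  have huT : ((List.range s).map fun i => ι (a (s + 1 + i)) * τ + 1).prod * ι T
      = (ι (a (s + 1) * T ^ q) * τ + ι T) *
        ((List.range (s - 1)).map fun i => ι (a (s + 2 + i) * T ^ (q - 1)) * τ + 1).prod := by
    rw [husplit, mul_assoc, moveList (fun i => a (s + 2 + i)), ← mul_assoc, key]
  have hfac : ι (a 1) * τ + ι T = ι T * (ι (T⁻¹ * a 1) * τ + 1) := by
    rw [mul_add, mul_one, ← mul_assoc, ← map_mul]
    congr 3
    field_simp
  set u := ((List.range s).map fun i => ι (a (s + 1 + i)) * τ + 1).prod with hudef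
  have main : u * ((ι (a 1) * τ + ι T) *
      ((List.range (r - 1)).map fun i => ι (a (i + 2)) * τ + 1).prod)
      = ((ι (a (s + 1) * T ^ q) * τ + ι T) *
        ((List.range (s - 1)).map fun i => ι (a (s + 2 + i) * T ^ (q - 1)) * τ + 1).prod *
        ((ι (T⁻¹ * a 1) * τ + 1) *
          ((List.range (s - 1)).map fun i => ι (a (i + 2)) * τ + 1).prod)) * u := by
    rw [hsplit, hfac, ← huT]
    simp only [mul_assoc]
  rw [main, mul_inv_cancel_right₀ hune]
end

section
/- For r = 2, with φ_T = (a₁τ + T)(a₂τ + 1) and u = a₂τ + 1, the matrix of u with respect to the basis {1, τ} of the T-motives (over B' = L'⊗A) is [[1, a₁^{-1}(1⊗T − T)], [a₂, −T a₁^{-1} a₂]], and its determinant equals −a₁^{-1}a₂ ⊗ T. -/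
/-- For `r = 2`, `φ_T = (a₁τ + T)(a₂τ + 1)` and the isogeny `u = a₂τ + 1`, the matrix of `u`
with respect to the basis `{1, τ}` of the `T`-motives over `B' = L'⊗A = L'[Y]` is
`[[1, a₁⁻¹(1⊗T − T)], [a₂, −T a₁⁻¹ a₂]]`, and its determinant equals `−a₁⁻¹a₂ ⊗ T`.

Here the twisted polynomial ring `L'{τ}` is a ring `D` with `ι : L' → D` and `τ·x = x^q·τ`;
the `B'`-module structure on the motive is `Y·m = m·φ_T`, scalars acting by `κ·m = ι(κ)m`.
The two columns of the matrix are the statements `1·u = 1·1 + a₂·τ` and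
`τ·u = a₁⁻¹(1⊗T − T)·1 + (−Ta₁⁻¹a₂)·τ`, where `(1⊗T − T)·1 = φ_T − ι(T)`. -/
theorem rank_two_isogeny_matrix_and_determinant
    (L : Type*) [Field L] (D : Type*) [Ring D]
    (ι : L →+* D) (τ : D) (q : ℕ) (hq : 1 ≤ q)
    (hcomm : ∀ x : L, τ * ι x = ι (x ^ q) * τ)
    (t a₁ a₂ : L) (ht : t ≠ 0) (ha₁ : a₁ ≠ 0) (ha₂ : a₂ ≠ 0)
    (φT u : D)
    (hφ : φT = (ι a₁ * τ + ι t) * (ι a₂ * τ + 1))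
    (hu : u = ι a₂ * τ + 1) :
    (1 * u = 1 * 1 + ι a₂ * τ) ∧
    (τ * u = ι a₁⁻¹ * (φT - ι t) + ι (-(t * a₁⁻¹ * a₂)) * τ) ∧
    (Matrix.det
        !![1, Polynomial.C a₁⁻¹ * (Polynomial.X - Polynomial.C t);
           Polynomial.C a₂, Polynomial.C (-(t * a₁⁻¹ * a₂))] =
      Polynomial.C (-(a₁⁻¹ * a₂)) * Polynomial.X) := by

  refine ⟨by rw [hu, one_mul, one_mul, add_comm], ?_, ?_⟩
  · subst hφ hu
    have e1 : τ * (ι a₂ * τ + 1) = ι (a₂ ^ q) * τ * τ + τ := by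
      rw [mul_add, ← mul_assoc, hcomm a₂, mul_one]
    have e2 : (ι a₁ * τ + ι t) * (ι a₂ * τ + 1) - ι t
        = ι a₁ * (ι (a₂ ^ q) * τ) * τ + ι a₁ * τ + ι t * (ι a₂ * τ) := by
      rw [← hcomm a₂]; noncomm_ring
    rw [e1, e2, mul_add, mul_add]
    have A1 : ι a₁⁻¹ * (ι a₁ * (ι (a₂ ^ q) * τ) * τ) = ι (a₂ ^ q) * τ * τ := by
      rw [← mul_assoc, ← mul_assoc, ← mul_assoc, ← map_mul, inv_mul_cancel₀ ha₁,
        map_one, one_mul]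
    have A2 : ι a₁⁻¹ * (ι a₁ * τ) = τ := by
      rw [← mul_assoc, ← map_mul, inv_mul_cancel₀ ha₁, map_one, one_mul]
    have A3 : ι a₁⁻¹ * (ι t * (ι a₂ * τ)) = ι (t * a₁⁻¹ * a₂) * τ := by
      rw [← mul_assoc, ← mul_assoc, ← map_mul, ← map_mul]
      have h : a₁⁻¹ * t * a₂ = t * a₁⁻¹ * a₂ := by ring
      rw [h]
    rw [A1, A2, A3, map_neg, neg_mul]
    abel
  · simp only [Matrix.det_fin_two_of, map_neg, map_mul]
    ring
end
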